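/- arXiv:0704.2777 — 2 statements merged into one kernel-verified Lean document; each statement's English description precedes it below -/
import Mathlib

section
/- For every permutation σ of {1,2}, every i ∈ {1,2}, and every non-negative integer n, F_σ(n) = (F_σ(n) ∩ V_i) ⊕ (F_σ(n) ∩ W_{σ̄(i)}). -/
/- The decomposition `F = (F ⊓ Vᵢ) + (F ⊓ W_{σ̄ i})` passes from `F = F_σ(n)` to `F_σ(n+1)` by the
modular law, since each summand of `F_σ(n+1)` lies in `F + Vᵢ` or in `F + W_{σ̄ i}`. Directness then
follows by counting dimensions: `F` is both `(F ⊓ V₁) + (F ⊓ W_{σ̄ 1})` and `(F ⊓ V₂) + (F ⊓ W_{σ̄ 2})`,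
while `F ⊓ V₁, F ⊓ V₂` and `F ⊓ W₁, F ⊓ W₂` are independent pairs, so the four dimensions add up
to at most `2 dim F`, which forces both sums to be direct. -/

open Submodule

/-- For a permutation `σ` of `{1,2}`, the increasing sequence of subspaces `F_σ(n)`:
`F_σ(0) = ⊥`, `F_σ(n+1) = Σ_i (F_σ(n) + Vᵢ) ⊓ (F_σ(n) + W_{σ(i)})`. -/
noncomputable def Fsig {K E : Type*} [Field K] [AddCommGroup E] [Module K E]
    (V W : Fin 2 → Submodule K E) (σ : Equiv.Perm (Fin 2)) : ℕ → Submodule K E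
  | 0 => ⊥
  | n + 1 => ⨆ i : Fin 2, (Fsig V W σ n ⊔ V i) ⊓ (Fsig V W σ n ⊔ W (σ i))

lemma inf_sup_le_inf_sup_inf_of_le {α : Type*} [Lattice α] [IsModularLattice α] {F F' A D : α}
    (hF : F ≤ F') (h : F ⊓ A ⊔ F ⊓ D = F) : F' ⊓ (F ⊔ A) ≤ F' ⊓ A ⊔ F' ⊓ D := by
  rw [inf_comm, sup_inf_assoc_of_le A hF, ← h, inf_comm A]
  exact sup_le (sup_le_sup (inf_le_inf_right A hF) (inf_le_inf_right D hF)) le_sup_left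

lemma Submodule.disjoint_of_sup_eq_sup {K E : Type*} [DivisionRing K] [AddCommGroup E]
    [Module K E] [FiniteDimensional K E] {P₁ P₂ Q₁ Q₂ : Submodule K E}
    (hP : Disjoint P₁ P₂) (hQ : Disjoint Q₁ Q₂) (h : P₁ ⊔ Q₂ = P₂ ⊔ Q₁) :
    Disjoint P₁ Q₂ := by
  have hPF : P₁ ⊔ P₂ ≤ P₁ ⊔ Q₂ := sup_le le_sup_left (h ▸ le_sup_left)
  have hQF : Q₁ ⊔ Q₂ ≤ P₁ ⊔ Q₂ := sup_le (h ▸ le_sup_right) le_sup_right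
  have e₁ := finrank_sup_add_finrank_inf_eq P₁ Q₂
  have e₂ := finrank_sup_add_finrank_inf_eq P₂ Q₁
  have e₃ := finrank_sup_add_finrank_inf_eq P₁ P₂
  have e₄ := finrank_sup_add_finrank_inf_eq Q₁ Q₂
  have l₁ := finrank_mono hPF
  have l₂ := finrank_mono hQF
  rw [disjoint_iff.mp hP, finrank_bot] at e₃
  rw [disjoint_iff.mp hQ, finrank_bot] at e₄
  rw [h] at e₁ l₁ l₂
  rw [disjoint_iff, ← finrank_eq_zero (R := K)]
  omega

lemma Equiv.Perm.fin_two_apply_add_one (σ : Equiv.Perm (Fin 2)) (i : Fin 2) :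
    σ (i + 1) = σ i + 1 := by
  revert σ i; decide

lemma Equiv.Perm.fin_two_apply_of_ne {σ σ' : Equiv.Perm (Fin 2)} (h : σ ≠ σ') (i : Fin 2) :
    σ' i = σ (i + 1) := by
  revert σ σ' i; decide

lemma IsCompl.disjoint_fin_two_add_one {α : Type*} [Lattice α] [BoundedOrder α]
    {X : Fin 2 → α} (h : IsCompl (X 0) (X 1)) (i : Fin 2) : Disjoint (X i) (X (i + 1)) := by
  fin_cases i
  exacts [h.disjoint, h.disjoint.symm]

section Fsig

variable {K E : Type*} [Field K] [AddCommGroup E] [Module K E]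
  (V W : Fin 2 → Submodule K E) (σ : Equiv.Perm (Fin 2))

lemma Fsig_succ (n : ℕ) :
    Fsig V W σ (n + 1) = ⨆ k, (Fsig V W σ n ⊔ V k) ⊓ (Fsig V W σ n ⊔ W (σ k)) :=
  rfl

lemma Fsig_le_succ (n : ℕ) : Fsig V W σ n ≤ Fsig V W σ (n + 1) :=
  le_iSup_of_le 0 (le_inf le_sup_left le_sup_left)

lemma Fsig_inf_sup_inf_eq (n : ℕ) (i : Fin 2) :
    Fsig V W σ n ⊓ V i ⊔ Fsig V W σ n ⊓ W (σ (i + 1)) = Fsig V W σ n := by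
  induction n generalizing i with
  | zero => simp [Fsig]
  | succ n ih =>
    refine le_antisymm (sup_le inf_le_left inf_le_left) ?_
    have hF := Fsig_le_succ V W σ n
    conv_lhs => rw [Fsig_succ]
    refine iSup_le fun k => ?_
    have hk : (Fsig V W σ n ⊔ V k) ⊓ (Fsig V W σ n ⊔ W (σ k)) ≤ Fsig V W σ (n + 1) :=
      le_iSup_of_le k le_rfl
    obtain rfl | rfl : k = i ∨ k = i + 1 := by omega
    · exact (le_inf hk inf_le_left).trans (inf_sup_le_inf_sup_inf_of_le hF (ih k))
    · rw [sup_comm (Fsig V W σ (n + 1) ⊓ V i)]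
      exact (le_inf hk inf_le_right).trans
        (inf_sup_le_inf_sup_inf_of_le hF ((sup_comm _ _).trans (ih i)))

end Fsig

theorem stmt11_general {K E : Type*} [Field K] [AddCommGroup E] [Module K E]
    [FiniteDimensional K E]
    (V W : Fin 2 → Submodule K E)
    (hV : IsCompl (V 0) (V 1)) (hW : IsCompl (W 0) (W 1)) :
    ∀ σ σ' : Equiv.Perm (Fin 2), σ ≠ σ' →
      ∀ (i : Fin 2) (n : ℕ),
        Disjoint (Fsig V W σ n ⊓ V i) (Fsig V W σ n ⊓ W (σ' i)) ∧
        (Fsig V W σ n ⊓ V i) ⊔ (Fsig V W σ n ⊓ W (σ' i)) = Fsig V W σ n := by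
  intro σ σ' hσ i n
  set F := Fsig V W σ n
  rw [Equiv.Perm.fin_two_apply_of_ne hσ]
  have h₁ : F ⊓ V i ⊔ F ⊓ W (σ (i + 1)) = F := Fsig_inf_sup_inf_eq V W σ n i
  have h₂ : F ⊓ V (i + 1) ⊔ F ⊓ W (σ i) = F := by
    simpa [add_assoc] using Fsig_inf_sup_inf_eq V W σ n (i + 1)
  have hVF : Disjoint (F ⊓ V i) (F ⊓ V (i + 1)) :=
    (hV.disjoint_fin_two_add_one i).mono inf_le_right inf_le_right
  have hWF : Disjoint (F ⊓ W (σ i)) (F ⊓ W (σ (i + 1))) := by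
    rw [Equiv.Perm.fin_two_apply_add_one]
    exact (hW.disjoint_fin_two_add_one (σ i)).mono inf_le_right inf_le_right
  exact ⟨disjoint_of_sup_eq_sup hVF hWF (h₁.trans h₂.symm), h₁⟩

/-- For every permutation `σ` of `{1,2}` (with `σ̄` the other permutation), every
`i ∈ {1,2}` and every `n`, `F_σ(n) = (F_σ(n) ∩ Vᵢ) ⊕ (F_σ(n) ∩ W_{σ̄(i)})`. -/
theorem stmt11 {K E : Type*} [Field K] [AddCommGroup E] [Module K E]
    [FiniteDimensional K E] (hchar : (2 : K) ≠ 0)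
    (V W : Fin 2 → Submodule K E)
    (hV : IsCompl (V 0) (V 1)) (hW : IsCompl (W 0) (W 1)) :
    ∀ σ σ' : Equiv.Perm (Fin 2), σ ≠ σ' →
      ∀ (i : Fin 2) (n : ℕ),
        Disjoint (Fsig V W σ n ⊓ V i) (Fsig V W σ n ⊓ W (σ' i)) ∧
        (Fsig V W σ n ⊓ V i) ⊔ (Fsig V W σ n ⊓ W (σ' i)) = Fsig V W σ n :=
  stmt11_general V W hV hW
end

section
/- Suppose W₁ = V₁^⊥ and W₂ = V₂^⊥ for a nondegenerate reflexive bilinear form ⟨·,·⟩ on E. Then E = F_e ⊕ F_τ ⊕ F̃, and the three subspaces F_e, F_τ, F̃ are pairwise orthogonal with respect to ⟨·,·⟩. -/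
/-!
Let `u` and `s` be the involutions of `E` with `(+1, -1)`-eigenspaces `(V₁, V₂)` and `(W₁, W₂)`.
Since `Wᵢ = Vᵢ^⊥`, `u` is adjoint to `-s`, so `c = u s` is self-adjoint. For a subspace `M`
invariant under `u` and `s`, `Σᵢ (M + Vᵢ) ∩ (M + Wᵢ)` is the preimage of `M` under `c - 1`, and
with `W₁, W₂` exchanged it is the preimage under `c + 1`. By induction, `F_e(n) = ker (c - 1)ⁿ`,
`F_τ(n) = ker (c + 1)ⁿ` and, passing to orthogonals, `F̃(n) = (ker (c - 1)ⁿ + ker (c + 1)ⁿ)^⊥`.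
As `X - 1` and `X + 1` are coprime, that sum is `ker (c² - 1)ⁿ`, whose orthogonal is
`range (c² - 1)ⁿ` by self-adjointness; the Fitting decomposition of `c² - 1` then splits `E`,
and the orthogonality of `F_e` and `F_τ` comes from `ker (c + 1)ⁿ ⊆ range (c - 1)ᵐ`.
-/

open Submodule LinearMap

/-- The decreasing sequence of subspaces `F̃(n)`:
`F̃(0) = E`, `F̃(n+1) = ∩_{i,j} ((F̃(n) ∩ Vᵢ) + (F̃(n) ∩ Wⱼ))`. -/
noncomputable def FTilde {K E : Type*} [Field K] [AddCommGroup E] [Module K E]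
    (V W : Fin 2 → Submodule K E) : ℕ → Submodule K E
  | 0 => ⊤
  | n + 1 => ⨅ i : Fin 2, ⨅ j : Fin 2, (FTilde V W n ⊓ V i) ⊔ (FTilde V W n ⊓ W j)

section

open Polynomial

variable {K E : Type*} [Field K] [AddCommGroup E] [Module K E]

theorem iSup_fin_two {α : Type*} [CompleteLattice α] (f : Fin 2 → α) :
    ⨆ i, f i = f 0 ⊔ f 1 :=
  le_antisymm (iSup_le (Fin.forall_fin_two.2 ⟨le_sup_left, le_sup_right⟩))
    (sup_le (le_iSup f 0) (le_iSup f 1))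

section Involution

variable {u s : Module.End K E} {M : Submodule K E}

theorem exists_involution_of_isCompl (h2 : (2 : K) ≠ 0)
    {p q : Submodule K E} (hpq : IsCompl p q) :
    ∃ u : Module.End K E, u * u = 1 ∧ ker (u - 1) = p ∧ ker (u + 1) = q := by
  set P := p.projection q hpq
  have hP : P * P = P := (isIdempotentElem_projection hpq).eq
  refine ⟨(2 : K) • P - 1, ?_, ?_, ?_⟩
  · rw [sub_mul, mul_sub, smul_mul_smul_comm, hP, mul_one, one_mul]
    module
  · ext x
    rw [mem_ker, ← projection_eq_self_iff hpq, sub_sub, ← two_smul K (1 : Module.End K E),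
      ← smul_sub, LinearMap.smul_apply, smul_eq_zero_iff_right h2, LinearMap.sub_apply,
      sub_eq_zero]
    rfl
  · ext x
    rw [mem_ker, sub_add_cancel, LinearMap.smul_apply, smul_eq_zero_iff_right h2,
      projection_apply_eq_zero_iff]

theorem mem_invtSubmodule_neg (hM : M ∈ u.invtSubmodule) : M ∈ (-u).invtSubmodule :=
  fun _ hx => by simpa using M.neg_mem (hM hx)

theorem sup_ker_sub_one_eq_comap (h2 : (2 : K) ≠ 0) (hu : u * u = 1)
    (hM : M ∈ u.invtSubmodule) : M ⊔ ker (u - 1) = M.comap (u - 1) := by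
  refine le_antisymm (sup_le (fun x hx => ?_) (fun x hx => ?_)) (fun x hx => ?_)
  · simpa using sub_mem (show u x ∈ M from hM hx) hx
  · simp [mem_ker.1 hx]
  · have hux : u x - x ∈ M := by simpa using hx
    have hfix : x + u x ∈ ker (u - 1) := by
      simp [← Module.End.mul_apply, hu, add_comm]
    refine (smul_mem_iff _ h2).1 ?_
    rw [show (2 : K) • x = (x + u x) - (u x - x) by module]
    exact sub_mem (mem_sup_right hfix) (mem_sup_left hux)

theorem sup_ker_add_one_eq_comap (h2 : (2 : K) ≠ 0) (hu : u * u = 1)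
    (hM : M ∈ u.invtSubmodule) : M ⊔ ker (u + 1) = M.comap (u + 1) := by
  have h := sup_ker_sub_one_eq_comap h2 (by rw [neg_mul_neg, hu]) (mem_invtSubmodule_neg hM)
  rwa [← neg_add', ker_neg, comap_neg] at h

theorem comap_inf_sup_comap_inf_eq_comap_mul_sub_one (h2 : (2 : K) ≠ 0) (hu : u * u = 1)
    (hs : s * s = 1) (hM : M ∈ u.invtSubmodule) :
    M.comap (u - 1) ⊓ M.comap (s - 1) ⊔ M.comap (u + 1) ⊓ M.comap (s + 1) =
      M.comap (u * s - 1) := by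
  have huu : ∀ y, u (u y) = y := LinearMap.congr_fun hu
  have hss : ∀ y, s (s y) = y := LinearMap.congr_fun hs
  have hMu : ∀ {y}, y ∈ M → u y ∈ M := fun hy => hM hy
  refine le_antisymm (sup_le (fun x ⟨hxu, hxs⟩ => ?_) (fun x ⟨hxu, hxs⟩ => ?_))
    (fun x hx => ?_)
  · have : (u * s - 1) x = u ((s - 1) x) + (u - 1) x := by simp
    simpa [this] using add_mem (hMu hxs) hxu
  · have : (u * s - 1) x = u ((s + 1) x) - (u + 1) x := by simp; abel
    simpa [this] using sub_mem (hMu hxs) hxu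
  · have hx' : (u * s - 1) x ∈ M := hx
    have hux : u ((u * s - 1) x) ∈ M := hM hx
    -- `(u ∓ 1) (x ± s x) = -(u ∓ 1) ((u * s - 1) x)`
    refine (smul_mem_iff _ h2).1 ?_
    rw [show (2 : K) • x = (x + s x) + (x - s x) by module]
    refine add_mem_sup ⟨?_, ?_⟩ ⟨?_, ?_⟩
    · show (u - 1) (x + s x) ∈ M
      convert sub_mem hx' hux using 1
      simp [huu]
      abel
    · simp [hss, add_comm]
    · show (u + 1) (x - s x) ∈ M
      convert neg_mem (add_mem hx' hux) using 1
      simp [huu]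
      abel
    · simp [hss]

theorem sup_inf_sup_eq_comap_mul_sub_one (h2 : (2 : K) ≠ 0) (hu : u * u = 1) (hs : s * s = 1)
    (hM : M ∈ u.invtSubmodule ⊓ s.invtSubmodule) :
    (M ⊔ ker (u - 1)) ⊓ (M ⊔ ker (s - 1)) ⊔ (M ⊔ ker (u + 1)) ⊓ (M ⊔ ker (s + 1)) =
      M.comap (u * s - 1) := by
  rw [sup_ker_sub_one_eq_comap h2 hu hM.1, sup_ker_sub_one_eq_comap h2 hs hM.2,
    sup_ker_add_one_eq_comap h2 hu hM.1, sup_ker_add_one_eq_comap h2 hs hM.2,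
    comap_inf_sup_comap_inf_eq_comap_mul_sub_one h2 hu hs hM.1]

theorem sup_inf_sup_eq_comap_mul_add_one (h2 : (2 : K) ≠ 0) (hu : u * u = 1) (hs : s * s = 1)
    (hM : M ∈ u.invtSubmodule ⊓ s.invtSubmodule) :
    (M ⊔ ker (u - 1)) ⊓ (M ⊔ ker (s + 1)) ⊔ (M ⊔ ker (u + 1)) ⊓ (M ⊔ ker (s - 1)) =
      M.comap (u * s + 1) := by
  have h := sup_inf_sup_eq_comap_mul_sub_one h2 hu (by rw [neg_mul_neg, hs])
    ⟨hM.1, mem_invtSubmodule_neg hM.2⟩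
  rwa [show -s - 1 = -(s + 1) by abel, show -s + 1 = -(s - 1) by abel, mul_neg,
    show -(u * s) - 1 = -(u * s + 1) by abel, ker_neg, ker_neg, comap_neg] at h

theorem ker_pow_mem_invtSubmodule {f g h : Module.End K E} (hfg : f * g = g * (h * f))
    (hhf : Commute h f) (n : ℕ) : ker (f ^ n) ∈ g.invtSubmodule := by
  intro x hx
  have hconj : f ^ n * g = g * (h ^ n * f ^ n) := by
    rw [← hhf.mul_pow]
    exact (SemiconjBy.pow_right (show SemiconjBy g (h * f) f from hfg.symm) n).symm
  rw [mem_comap, mem_ker, ← Module.End.mul_apply, hconj, Module.End.mul_apply,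
    Module.End.mul_apply, mem_ker.1 hx, map_zero, map_zero]

theorem ker_pow_sub_one_mem_invtSubmodule {c c' g : Module.End K E} (hg : c * g = g * c')
    (hc : c' * c = 1) (hc' : c * c' = 1) (n : ℕ) : ker ((c - 1) ^ n) ∈ g.invtSubmodule := by
  refine ker_pow_mem_invtSubmodule (h := -c') ?_ ?_ n
  · simp only [sub_mul, mul_sub, neg_mul, mul_neg, hg, hc, mul_one, one_mul]
    abel
  · have hcomm : Commute c' c := hc.trans hc'.symm
    exact (hcomm.sub_right (Commute.one_right c')).neg_left

theorem ker_pow_add_one_mem_invtSubmodule {c c' g : Module.End K E} (hg : c * g = g * c')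
    (hc : c' * c = 1) (hc' : c * c' = 1) (n : ℕ) : ker ((c + 1) ^ n) ∈ g.invtSubmodule := by
  refine ker_pow_mem_invtSubmodule (h := c') ?_ ?_ n
  · simp only [add_mul, mul_add, hg, hc, mul_one, one_mul]
    abel
  · have hcomm : Commute c' c := hc.trans hc'.symm
    exact hcomm.add_right (Commute.one_right c')

theorem ker_pow_mul_sub_one_and_add_one_mem_invtSubmodule (hu : u * u = 1) (hs : s * s = 1)
    (n : ℕ) : ker ((u * s - 1) ^ n) ∈ u.invtSubmodule ⊓ s.invtSubmodule ∧
      ker ((u * s + 1) ^ n) ∈ u.invtSubmodule ⊓ s.invtSubmodule := by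
  have hc : s * u * (u * s) = 1 := by rw [mul_assoc, ← mul_assoc u, hu, one_mul, hs]
  have hc' : u * s * (s * u) = 1 := by rw [mul_assoc, ← mul_assoc s, hs, one_mul, hu]
  have hcs : u * s * s = s * (s * u) := by rw [mul_assoc, hs, mul_one, ← mul_assoc, hs, one_mul]
  exact ⟨⟨ker_pow_sub_one_mem_invtSubmodule (mul_assoc u s u) hc hc' n,
      ker_pow_sub_one_mem_invtSubmodule hcs hc hc' n⟩,
    ⟨ker_pow_add_one_mem_invtSubmodule (mul_assoc u s u) hc hc' n,
      ker_pow_add_one_mem_invtSubmodule hcs hc hc' n⟩⟩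

end Involution

theorem ker_pow_succ_eq_comap (f : Module.End K E) (n : ℕ) :
    ker (f ^ (n + 1)) = (ker (f ^ n)).comap f := by
  rw [pow_succ, Module.End.mul_eq_comp, ker_comp]

section Coprime

theorem isCoprime_X_sub_one_X_add_one (h2 : (2 : K) ≠ 0) :
    IsCoprime (X - C (1 : K)) (X + C 1) := by
  simpa using isCoprime_X_sub_C_of_isUnit_sub (R := K) (a := 1) (b := -1)
    (by rw [sub_neg_eq_add, one_add_one_eq_two]; exact h2.isUnit)

theorem ker_aeval_le_map_ker_aeval {f : Module.End K E} {p q : K[X]} (hpq : IsCoprime p q) :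
    ker (aeval f q) ≤ (ker (aeval f q)).map (aeval f p) := by
  obtain ⟨r, t, h⟩ := hpq
  intro y hy
  refine ⟨aeval f r y, ?_, ?_⟩
  · rw [SetLike.mem_coe, mem_ker, ← Module.End.mul_apply, ← map_mul, mul_comm, map_mul,
      Module.End.mul_apply, mem_ker.1 hy, map_zero]
  · have hy' := congr($(congrArg (aeval f) h) y)
    simpa [mul_comm r p, mem_ker.1 hy] using hy'

theorem comap_sup_ker_pow_le {a b : Module.End K E} {n : ℕ}
    (h : ker (b ^ n) ≤ (ker (b ^ n)).map a) :
    (ker (a ^ n) ⊔ ker (b ^ n)).comap a ≤ ker (a ^ (n + 1)) ⊔ ker (b ^ (n + 1)) := by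
  intro x hx
  obtain ⟨k, hk, l, hl, hkl⟩ := mem_sup.1 hx
  obtain ⟨z, hz, rfl⟩ := h hl
  have hxz : x - z ∈ ker (a ^ (n + 1)) := by
    rwa [ker_pow_succ_eq_comap, mem_comap, map_sub, ← hkl, add_sub_cancel_right]
  have hz' : z ∈ ker (b ^ (n + 1)) := by
    rw [mem_ker, pow_succ', Module.End.mul_apply, mem_ker.1 hz, map_zero]
  simpa using add_mem_sup hxz hz'

theorem comap_sub_one_sup_comap_add_one (h2 : (2 : K) ≠ 0) (c : Module.End K E) (n : ℕ) :
    (ker ((c - 1) ^ n) ⊔ ker ((c + 1) ^ n)).comap (c - 1) ⊔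
        (ker ((c - 1) ^ n) ⊔ ker ((c + 1) ^ n)).comap (c + 1) =
      ker ((c - 1) ^ (n + 1)) ⊔ ker ((c + 1) ^ (n + 1)) := by
  have hcop := isCoprime_X_sub_one_X_add_one h2
  refine le_antisymm (sup_le (comap_sup_ker_pow_le ?_) ?_) ?_
  · simpa using ker_aeval_le_map_ker_aeval (f := c) (hcop.pow_right (n := n))
  · rw [sup_comm, sup_comm (ker ((c - 1) ^ (n + 1)))]
    refine comap_sup_ker_pow_le ?_
    simpa using ker_aeval_le_map_ker_aeval (f := c) (hcop.symm.pow_right (n := n))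
  · rw [ker_pow_succ_eq_comap, ker_pow_succ_eq_comap]
    exact sup_le_sup (comap_mono le_sup_left) (comap_mono le_sup_right)

theorem iSup_ker_pow_add_one_le_range_pow_sub_one (h2 : (2 : K) ≠ 0) (c : Module.End K E)
    (m : ℕ) : ⨆ n, ker ((c + 1) ^ n) ≤ range ((c - 1) ^ m) :=
  iSup_le fun n => by
    simpa using (ker_aeval_le_map_ker_aeval (f := c)
      ((isCoprime_X_sub_one_X_add_one h2).pow (m := m) (n := n))).trans (map_le_range)

theorem disjoint_iSup_ker_pow_sub_one_iSup_ker_pow_add_one [FiniteDimensional K E]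
    (h2 : (2 : K) ≠ 0) (c : Module.End K E) :
    Disjoint (⨆ n, ker ((c - 1) ^ n)) (⨆ n, ker ((c + 1) ^ n)) :=
  (isCompl_iSup_ker_pow_iInf_range_pow (c - 1)).disjoint.mono_right
    (le_iInf (iSup_ker_pow_add_one_le_range_pow_sub_one h2 c))

end Coprime

namespace LinearMap.BilinForm

variable {B : LinearMap.BilinForm K E}

theorem mem_orthogonal_iff_le_ker_flip {N : Submodule K E} {m : E} :
    m ∈ B.orthogonal N ↔ N ≤ ker (B.flip m) := by
  simp [mem_orthogonal_iff, SetLike.le_def]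

theorem orthogonal_iSup {ι : Sort*} (N : ι → Submodule K E) :
    B.orthogonal (⨆ i, N i) = ⨅ i, B.orthogonal (N i) := by
  ext m
  simp only [mem_iInf, mem_orthogonal_iff_le_ker_flip, iSup_le_iff]

theorem orthogonal_sup (N L : Submodule K E) :
    B.orthogonal (N ⊔ L) = B.orthogonal N ⊓ B.orthogonal L := by
  ext m
  simp only [mem_inf, mem_orthogonal_iff_le_ker_flip, sup_le_iff]

variable [FiniteDimensional K E]

theorem orthogonal_inf (hB : B.Nondegenerate) (hBr : B.IsRefl) (N L : Submodule K E) :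
    B.orthogonal (N ⊓ L) = B.orthogonal N ⊔ B.orthogonal L := by
  conv_lhs => rw [← orthogonal_orthogonal hB hBr N, ← orthogonal_orthogonal hB hBr L,
    ← orthogonal_sup]
  exact orthogonal_orthogonal hB hBr _

theorem orthogonal_ker_eq_range (hB : B.Nondegenerate) {f : Module.End K E}
    (hf : B.IsSelfAdjoint f) : B.orthogonal (ker f) = range f := by
  refine (eq_of_le_of_finrank_eq ?_ ?_).symm
  · rintro _ ⟨z, rfl⟩ k hk
    rw [← hf, mem_ker.1 hk, map_zero, LinearMap.zero_apply]
  · have := f.finrank_range_add_finrank_ker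
    rw [finrank_orthogonal hB]
    omega

end LinearMap.BilinForm

section Chains

variable {u s : Module.End K E}

theorem Fsig_one_eq_ker_pow (h2 : (2 : K) ≠ 0) (hu : u * u = 1) (hs : s * s = 1) (n : ℕ) :
    Fsig ![ker (u - 1), ker (u + 1)] ![ker (s - 1), ker (s + 1)] 1 n = ker ((u * s - 1) ^ n) := by
  induction n with
  | zero => simp [Fsig, Module.End.one_eq_id]
  | succ n ih =>
    rw [Fsig, iSup_fin_two, ih, ker_pow_succ_eq_comap, ← sup_inf_sup_eq_comap_mul_sub_one h2 hu hs
      (ker_pow_mul_sub_one_and_add_one_mem_invtSubmodule hu hs n).1]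
    rfl

theorem Fsig_swap_eq_ker_pow (h2 : (2 : K) ≠ 0) (hu : u * u = 1) (hs : s * s = 1) (n : ℕ) :
    Fsig ![ker (u - 1), ker (u + 1)] ![ker (s - 1), ker (s + 1)] (Equiv.swap 0 1) n =
      ker ((u * s + 1) ^ n) := by
  induction n with
  | zero => simp [Fsig, Module.End.one_eq_id]
  | succ n ih =>
    rw [Fsig, iSup_fin_two, ih, ker_pow_succ_eq_comap, ← sup_inf_sup_eq_comap_mul_add_one h2 hu hs
      (ker_pow_mul_sub_one_and_add_one_mem_invtSubmodule hu hs n).2]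
    rfl

theorem FTilde_eq_orthogonal [FiniteDimensional K E] (h2 : (2 : K) ≠ 0)
    {B : LinearMap.BilinForm K E} (hB : B.Nondegenerate) (hBr : B.IsRefl)
    (hu : u * u = 1) (hs : s * s = 1) (hW0 : ker (s - 1) = B.orthogonal (ker (u - 1)))
    (hW1 : ker (s + 1) = B.orthogonal (ker (u + 1))) (n : ℕ) :
    FTilde ![ker (u - 1), ker (u + 1)] ![ker (s - 1), ker (s + 1)] n =
      B.orthogonal (ker ((u * s - 1) ^ n) ⊔ ker ((u * s + 1) ^ n)) := by
  set V := ![ker (u - 1), ker (u + 1)]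
  set W := ![ker (s - 1), ker (s + 1)]
  have hW : ∀ i, W i = B.orthogonal (V i) := Fin.forall_fin_two.2 ⟨hW0, hW1⟩
  have hV : ∀ i, V i = B.orthogonal (W i) := fun i => by
    rw [hW, BilinForm.orthogonal_orthogonal hB hBr]
  induction n with
  | zero => simp [FTilde, Module.End.one_eq_id]
  | succ n ih =>
    set G := ker ((u * s - 1) ^ n) ⊔ ker ((u * s + 1) ^ n)
    have hG : G ∈ u.invtSubmodule ⊓ s.invtSubmodule :=
      Sublattice.sup_mem (ker_pow_mul_sub_one_and_add_one_mem_invtSubmodule hu hs n).1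
        (ker_pow_mul_sub_one_and_add_one_mem_invtSubmodule hu hs n).2
    have step : ∀ i j, FTilde V W n ⊓ V i ⊔ FTilde V W n ⊓ W j =
        B.orthogonal ((G ⊔ V j) ⊓ (G ⊔ W i)) := fun i j => by
      rw [ih, hV i, hW j, ← BilinForm.orthogonal_sup, ← BilinForm.orthogonal_sup,
        ← BilinForm.orthogonal_inf hB hBr, inf_comm]
    simp only [FTilde, step, ← BilinForm.orthogonal_iSup]
    rw [iSup_fin_two, iSup_fin_two, iSup_fin_two, ← comap_sub_one_sup_comap_add_one h2,
      ← sup_inf_sup_eq_comap_mul_sub_one h2 hu hs hG,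
      ← sup_inf_sup_eq_comap_mul_add_one h2 hu hs hG]
    simp only [V, W, Matrix.cons_val_zero, Matrix.cons_val_one]
    ac_rfl

end Chains

section SelfAdjoint

variable {B : LinearMap.BilinForm K E}

theorem isAdjointPair_neg_of_le_orthogonal {u s : Module.End K E} (hs : s * s = 1)
    (hu : ker (u - 1) ⊔ ker (u + 1) = ⊤) (h0 : ker (s - 1) ≤ B.orthogonal (ker (u - 1)))
    (h1 : ker (s + 1) ≤ B.orthogonal (ker (u + 1))) : IsAdjointPair B B u ⇑(-s) := by
  have hss : ∀ y, s (s y) = y := LinearMap.congr_fun hs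
  intro x y
  obtain ⟨x₀, hx₀, x₁, hx₁, rfl⟩ :=
    mem_sup.1 (hu ▸ mem_top : x ∈ ker (u - 1) ⊔ ker (u + 1))
  have e₀ : B x₀ (y + s y) = 0 := h0 (by simp [hss, add_comm]) x₀ hx₀
  have e₁ : B x₁ (s y - y) = 0 := h1 (by simp [hss]) x₁ hx₁
  have hu₀ : u x₀ = x₀ := by simpa [sub_eq_zero] using hx₀
  have hu₁ : u x₁ = -x₁ := by simpa [add_eq_zero_iff_eq_neg] using hx₁
  simp only [map_add, map_sub, map_neg, hu₀, hu₁, LinearMap.add_apply,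
    LinearMap.neg_apply] at e₀ e₁ ⊢
  linear_combination e₀ + e₁

theorem isSelfAdjoint_aeval {f : Module.End K E} (hf : B.IsSelfAdjoint f) (p : K[X]) :
    B.IsSelfAdjoint (aeval f p) := by
  induction p using Polynomial.induction_on with
  | C a => intro x y; simp [Algebra.algebraMap_eq_smul_one]
  | add p q hp hq => intro x y; simp [hp x y, hq x y]
  | monomial n a h =>
    have hcomm : Commute (aeval f (C a * X ^ n)) f := by
      simpa only [aeval_X] using (Commute.all (C a * X ^ n) X).map (aeval (R := K) f)
    intro x y
    rw [pow_succ, ← mul_assoc, map_mul, aeval_X, Module.End.mul_apply, h, hf, hcomm.eq,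
      Module.End.mul_apply]

variable [FiniteDimensional K E] {c : Module.End K E}

theorem iSup_ker_pow_add_one_le_orthogonal (h2 : (2 : K) ≠ 0) (hB : B.Nondegenerate)
    (hc : B.IsSelfAdjoint c) :
    ⨆ n, ker ((c + 1) ^ n) ≤ B.orthogonal (⨆ n, ker ((c - 1) ^ n)) := by
  rw [BilinForm.orthogonal_iSup]
  refine le_iInf fun m => ?_
  have h := BilinForm.orthogonal_ker_eq_range hB (isSelfAdjoint_aeval hc ((X - C 1) ^ m))
  simp only [map_pow, map_sub, aeval_X, map_one] at h
  rw [h]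
  exact iSup_ker_pow_add_one_le_range_pow_sub_one h2 c m

theorem isCompl_iSup_ker_pow_sup_orthogonal (h2 : (2 : K) ≠ 0) (hB : B.Nondegenerate)
    (hc : B.IsSelfAdjoint c) :
    IsCompl ((⨆ n, ker ((c - 1) ^ n)) ⊔ ⨆ n, ker ((c + 1) ^ n))
      (B.orthogonal ((⨆ n, ker ((c - 1) ^ n)) ⊔ ⨆ n, ker ((c + 1) ^ n))) := by
  have hker : ∀ n, ker ((c - 1) ^ n) ⊔ ker ((c + 1) ^ n) = ker (((c - 1) * (c + 1)) ^ n) :=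
    fun n => by
      have h := sup_ker_aeval_eq_ker_aeval_mul_of_coprime c
        ((isCoprime_X_sub_one_X_add_one h2).pow (m := n) (n := n))
      rw [← mul_pow] at h
      simpa using h
  have hrange : ∀ n,
      B.orthogonal (ker (((c - 1) * (c + 1)) ^ n)) = range (((c - 1) * (c + 1)) ^ n) :=
    fun n => by
      have h := BilinForm.orthogonal_ker_eq_range hB
        (isSelfAdjoint_aeval hc (((X - C 1) * (X + C 1)) ^ n))
      simpa only [map_pow, map_mul, map_sub, map_add, aeval_X, map_one] using h
  rw [← iSup_sup_eq]
  simp only [hker, BilinForm.orthogonal_iSup, hrange]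
  exact isCompl_iSup_ker_pow_iInf_range_pow _

end SelfAdjoint

end

/-- If `W₁ = V₁^⊥` and `W₂ = V₂^⊥` for a nondegenerate reflexive bilinear form, then
`E = F_e ⊕ F_τ ⊕ F̃` and the three summands are pairwise orthogonal. -/
theorem stmt13 {K E : Type*} [Field K] [AddCommGroup E] [Module K E]
    [FiniteDimensional K E] (hchar : (2 : K) ≠ 0)
    (B : LinearMap.BilinForm K E) (hBnd : B.Nondegenerate) (hBrefl : B.IsRefl)
    (V : Fin 2 → Submodule K E) (hV : IsCompl (V 0) (V 1))
    (W : Fin 2 → Submodule K E) (hWdef : ∀ i, W i = B.orthogonal (V i))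
    (hW : IsCompl (W 0) (W 1))
    (Fe Ftau Ft : Submodule K E)
    (hFe : Fe = ⨆ n : ℕ, Fsig V W 1 n)
    (hFtau : Ftau = ⨆ n : ℕ, Fsig V W (Equiv.swap 0 1) n)
    (hFt : Ft = ⨅ n : ℕ, FTilde V W n) :
    (Disjoint Fe Ftau ∧ Disjoint (Fe ⊔ Ftau) Ft ∧ Fe ⊔ Ftau ⊔ Ft = ⊤) ∧
    (∀ x ∈ Fe, ∀ y ∈ Ftau, B x y = 0) ∧
    (∀ x ∈ Fe, ∀ y ∈ Ft, B x y = 0) ∧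
    (∀ x ∈ Ftau, ∀ y ∈ Ft, B x y = 0) := by
  obtain ⟨u, hu, hV0, hV1⟩ := exists_involution_of_isCompl hchar hV
  obtain ⟨s, hs, hW0, hW1⟩ := exists_involution_of_isCompl hchar hW
  obtain rfl : V = ![ker (u - 1), ker (u + 1)] := by ext1 i; fin_cases i <;> simp [hV0, hV1]
  obtain rfl : W = ![ker (s - 1), ker (s + 1)] := by ext1 i; fin_cases i <;> simp [hW0, hW1]
  have hW0 : ker (s - 1) = B.orthogonal (ker (u - 1)) := hWdef 0
  have hW1 : ker (s + 1) = B.orthogonal (ker (u + 1)) := hWdef 1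
  have hc : B.IsSelfAdjoint (u * s) := by
    have hus := isAdjointPair_neg_of_le_orthogonal hs hV.sup_eq_top hW0.le hW1.le
    have hsu := isAdjointPair_neg_of_le_orthogonal hu hW.sup_eq_top
      (hW0 ▸ BilinForm.le_orthogonal_orthogonal hBrefl)
      (hW1 ▸ BilinForm.le_orthogonal_orthogonal hBrefl)
    intro x y
    simpa using hus.mul hsu x y
  simp only [Fsig_one_eq_ker_pow hchar hu hs] at hFe
  simp only [Fsig_swap_eq_ker_pow hchar hu hs] at hFtau
  simp only [FTilde_eq_orthogonal hchar hBnd hBrefl hu hs hW0 hW1, ← BilinForm.orthogonal_iSup,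
    iSup_sup_eq] at hFt
  subst hFe hFtau hFt
  have hcompl := isCompl_iSup_ker_pow_sup_orthogonal hchar hBnd hc
  exact ⟨⟨disjoint_iSup_ker_pow_sub_one_iSup_ker_pow_add_one hchar _, hcompl.disjoint,
      hcompl.sup_eq_top⟩,
    fun x hx y hy => iSup_ker_pow_add_one_le_orthogonal hchar hBnd hc hy x hx,
    fun x hx y hy => hy x (mem_sup_left hx), fun x hx y hy => hy x (mem_sup_right hx)⟩
end
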